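/- arXiv:2501.15906 — 2 statements merged into one kernel-verified Lean document; each statement's English description precedes it below -/
import Mathlib

section
/- For any K ∈ R^{n×n} and any rank-one K = u v^T, rho_1(K) := inf over positive diagonal Δ of ‖Δ K Δ^{-1}‖ satisfies rho_1(K) ≤ Σ_j |u_j v_j|. (Combined with rho_0(K) = Σ_j |u_j v_j| ≤ rho_1(K), one gets rho_0(K) = rho_1(K) = |v|^T|u| for rank-one K.) -/
/-!
Conjugating `u vᵀ` by `Δ = diag d` gives the rank-one matrix `(d u)(v / d)ᵀ`, whose operator norm
is `‖d u‖ ‖v / d‖ ≤ (‖d u‖² + ‖v / d‖²) / 2`. The balancing weights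
`d i = √((|v i| + t) / (|u i| + t))` make both `(d i u i)²` and `(v i / d i)²` at most
`|u i v i| + O(t)`, so `rho1 (u vᵀ) ≤ ∑ |u i v i| + O(t)` for every `t > 0`.
-/

open Matrix

noncomputable def opNorm {n : ℕ} (M : Matrix (Fin n) (Fin n) ℝ) : ℝ :=
  ‖Matrix.toEuclideanCLM (𝕜 := ℝ) M‖

noncomputable def rho1 {n : ℕ} (K : Matrix (Fin n) (Fin n) ℝ) : ℝ :=
  sInf { x : ℝ | ∃ d : Fin n → ℝ, (∀ i, 0 < d i) ∧
    x = opNorm (Matrix.diagonal d * K * Matrix.diagonal (fun i => (d i)⁻¹)) }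

open Filter Topology WithLp

theorem Matrix.diagonal_mul_vecMulVec_mul_diagonal {m α : Type*} [Fintype m] [DecidableEq m]
    [NonUnitalSemiring α] (d e u v : m → α) :
    diagonal d * vecMulVec u v * diagonal e = vecMulVec (d * u) (v * e) := by
  rw [mul_vecMulVec, vecMulVec_mul]
  congr 1 <;> ext i
  exacts [mulVec_diagonal d u i, vecMul_diagonal v e i]

theorem Matrix.toEuclideanCLM_vecMulVec {m : Type*} [Fintype m] [DecidableEq m] (x y : m → ℝ) :
    toEuclideanCLM (𝕜 := ℝ) (vecMulVec x y) =
      InnerProductSpace.rankOne ℝ (toLp 2 x) (toLp 2 y) := by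
  ext z i
  simp [vecMulVec_mulVec, dotProduct, PiLp.inner_apply, mul_comm]

theorem opNorm_vecMulVec {n : ℕ} (x y : Fin n → ℝ) :
    opNorm (vecMulVec x y) = ‖toLp 2 x‖ * ‖toLp 2 y‖ := by
  rw [opNorm, toEuclideanCLM_vecMulVec, InnerProductSpace.norm_rankOne]

theorem opNorm_vecMulVec_le {n : ℕ} (x y : Fin n → ℝ) :
    opNorm (vecMulVec x y) ≤ (∑ i, x i ^ 2 + ∑ i, y i ^ 2) / 2 := by
  have := two_mul_le_add_sq ‖toLp 2 x‖ ‖toLp 2 y‖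
  simp only [EuclideanSpace.real_norm_sq_eq] at this
  rw [opNorm_vecMulVec]
  linarith

theorem rho1_le_opNorm {n : ℕ} (K : Matrix (Fin n) (Fin n) ℝ) {d : Fin n → ℝ}
    (hd : ∀ i, 0 < d i) :
    rho1 K ≤ opNorm (diagonal d * K * diagonal (fun i => (d i)⁻¹)) :=
  csInf_le ⟨0, by rintro x ⟨e, -, rfl⟩; exact norm_nonneg _⟩ ⟨d, hd, rfl⟩

theorem sq_mul_div_abs_add_le (a b : ℝ) {t : ℝ} (ht : 0 < t) :
    a ^ 2 * ((|b| + t) / (|a| + t)) ≤ |a * b| + t * |a| := by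
  have hpos : 0 < |a| + t := by positivity
  rw [mul_div_assoc', div_le_iff₀ hpos, ← sq_abs, abs_mul]
  nlinarith [mul_nonneg (mul_nonneg ht.le (abs_nonneg a)) (abs_nonneg b),
    mul_nonneg (sq_nonneg t) (abs_nonneg a)]

theorem le_of_forall_pos_le_add_mul {a b c : ℝ} (h : ∀ t > 0, a ≤ b + t * c) : a ≤ b := by
  have hlim : Tendsto (fun t : ℝ => b + t * c) (𝓝[>] 0) (𝓝 b) :=
    (Continuous.tendsto' (f := fun t : ℝ => b + t * c) (by fun_prop) 0 b (by simp)).mono_left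
      nhdsWithin_le_nhds
  exact ge_of_tendsto hlim (eventually_nhdsWithin_of_forall h)

theorem rho1_vecMulVec_le_add {n : ℕ} (u v : Fin n → ℝ) {t : ℝ} (ht : 0 < t) :
    rho1 (vecMulVec u v) ≤ ∑ j, |u j * v j| + t * ((∑ j, |u j| + ∑ j, |v j|) / 2) := by
  set d : Fin n → ℝ := fun i => √((|v i| + t) / (|u i| + t))
  have hd : ∀ i, 0 < d i := fun i => by positivity
  have hdu : ∀ i, (d * u) i ^ 2 ≤ |u i * v i| + t * |u i| := fun i => by
    rw [Pi.mul_apply, mul_pow, Real.sq_sqrt (by positivity), mul_comm]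
    exact sq_mul_div_abs_add_le _ _ ht
  have hvd : ∀ i, (v * fun i => (d i)⁻¹) i ^ 2 ≤ |u i * v i| + t * |v i| := fun i => by
    rw [Pi.mul_apply, mul_pow, ← Real.sqrt_inv, inv_div, Real.sq_sqrt (by positivity),
      mul_comm (u i)]
    exact sq_mul_div_abs_add_le _ _ ht
  calc rho1 (vecMulVec u v)
      ≤ opNorm (vecMulVec (d * u) (v * fun i => (d i)⁻¹)) := by
        rw [← diagonal_mul_vecMulVec_mul_diagonal]; exact rho1_le_opNorm _ hd
    _ ≤ (∑ i, (d * u) i ^ 2 + ∑ i, (v * fun i => (d i)⁻¹) i ^ 2) / 2 :=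
        opNorm_vecMulVec_le _ _
    _ ≤ (∑ i, (|u i * v i| + t * |u i|) + ∑ i, (|u i * v i| + t * |v i|)) / 2 := by
        gcongr with i _ i _
        exacts [hdu i, hvd i]
    _ = ∑ j, |u j * v j| + t * ((∑ j, |u j| + ∑ j, |v j|) / 2) := by
        simp only [Finset.sum_add_distrib, ← Finset.mul_sum]; ring

theorem rho1_rank_one_le_general {n : ℕ} (u v : Fin n → ℝ) :
    rho1 (Matrix.vecMulVec u v) ≤ ∑ j, |u j * v j| :=
  le_of_forall_pos_le_add_mul fun _ ht => rho1_vecMulVec_le_add u v ht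

theorem rho1_rank_one_le {n : ℕ} (u v : Fin n → ℝ) (hu : u ≠ 0) (hv : v ≠ 0) :
    rho1 (Matrix.vecMulVec u v) ≤ ∑ j, |u j * v j| :=
  rho1_rank_one_le_general u v
end

section
/- Let A, K_0, K_L ∈ R^{n×n}, T ∈ GL_n(R), with A − K_0 invertible and K_L = u v^T of rank one. If |v^T T| · |((A − K_0) T)^{-1} u| < 1 (dot product of entrywise absolute values of the row vector v^T T and the column vector ((A−K_0)T)^{-1} u), then ρ_0(((A − K_0) T)^{-1} K_L T) < 1, where ρ_0(K) = sup_θ ρ(diag(e^{iθ_1},...,e^{iθ_n}) K). Conversely, if the dot product is ≥ 1 then ρ_0 ≥ 1. -/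
open Matrix Complex

noncomputable def specRad {n : ℕ} (M : Matrix (Fin n) (Fin n) ℂ) : ℝ :=
  sSup ((fun z : ℂ => ‖z‖) '' spectrum ℂ M)

noncomputable def rho0 {n : ℕ} (K : Matrix (Fin n) (Fin n) ℝ) : ℝ :=
  ⨆ θ : Fin n → ℝ,
    specRad (Matrix.diagonal (fun j => Complex.exp ((θ j : ℂ) * Complex.I)) *
      K.map (fun x => (x : ℂ)))

/-!
The matrix `((A - K₀) T)⁻¹ (u vᵀ) T` is the rank-one matrix `a bᵀ` with `a = ((A - K₀) T)⁻¹ u`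
and `b = Tᵀ v`, so both implications follow from the identity `ρ₀(a bᵀ) = ∑ |a_j b_j|`.
The only possible nonzero eigenvalue of `x yᵀ` is `y ⬝ x`, so the spectral radius of
`diag(e^{iθ}) a bᵀ` is `|∑ e^{iθ_j} a_j b_j|`. This is at most `∑ |a_j b_j|` by the triangle
inequality, with equality when each `θ_j` rotates `a_j b_j` onto the positive real axis.
-/

namespace Matrix

theorem map_vecMulVec {α β m n : Type*} [Mul α] [Mul β] {f : α → β}
    (hf : ∀ a b, f (a * b) = f a * f b) (x : m → α) (y : n → α) :
    (vecMulVec x y).map f = vecMulVec (f ∘ x) (f ∘ y) := by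
  ext
  simp [vecMulVec_apply, hf]

variable {ι K : Type*} [Fintype ι] [DecidableEq ι] [Field K]

theorem mem_spectrum_vecMulVec {x y : ι → K} {μ : K} (hμ : μ ∈ spectrum K (vecMulVec x y)) :
    μ = 0 ∨ μ = y ⬝ᵥ x := by
  rw [← AlgEquiv.spectrum_eq toLinAlgEquiv', ← Module.End.hasEigenvalue_iff_mem_spectrum] at hμ
  obtain ⟨w, hw⟩ := hμ.exists_hasEigenvector
  have hxw : (y ⬝ᵥ w) • x = μ • w := by
    simpa [vecMulVec_mulVec] using hw.apply_eq_smul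
  by_cases hμ0 : μ = 0
  · exact .inl hμ0
  have hyw : y ⬝ᵥ w ≠ 0 := fun h => hw.2 <| by
    simpa [h, hμ0, eq_comm] using hxw
  have hdot := congrArg (y ⬝ᵥ ·) hxw
  simp only [dotProduct_smul, smul_eq_mul] at hdot
  exact .inr (mul_left_cancel₀ hyw (hdot.trans (mul_comm _ _))).symm

theorem dotProduct_mem_spectrum_vecMulVec {x y : ι → K} (h : y ⬝ᵥ x ≠ 0) :
    y ⬝ᵥ x ∈ spectrum K (vecMulVec x y) := by
  rw [← AlgEquiv.spectrum_eq toLinAlgEquiv', ← Module.End.hasEigenvalue_iff_mem_spectrum]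
  refine Module.End.hasEigenvalue_of_hasEigenvector (x := x) ⟨?_, ?_⟩
  · rw [Module.End.mem_eigenspace_iff, toLinAlgEquiv'_apply, vecMulVec_mulVec, op_smul_eq_smul]
  · rintro rfl
    simp at h

end Matrix

theorem specRad_vecMulVec {n : ℕ} (x y : Fin n → ℂ) :
    specRad (vecMulVec x y) = ‖y ⬝ᵥ x‖ := by
  have hsub : (‖·‖) '' spectrum ℂ (vecMulVec x y) ⊆ {0, ‖y ⬝ᵥ x‖} := by
    rintro _ ⟨μ, hμ, rfl⟩
    rcases mem_spectrum_vecMulVec hμ with rfl | rfl <;> simp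
  refine le_antisymm (Real.sSup_le (fun r hr => ?_) (norm_nonneg _)) ?_
  · rcases hsub hr with rfl | rfl
    exacts [norm_nonneg _, le_rfl]
  · by_cases h : y ⬝ᵥ x = 0
    · rw [h, norm_zero]
      exact Real.sSup_nonneg fun r hr => by rcases hsub hr with rfl | rfl <;> simp
    · exact le_csSup ((Set.toFinite _).subset hsub |>.bddAbove)
        ⟨_, dotProduct_mem_spectrum_vecMulVec h, rfl⟩

theorem specRad_diagonal_mul_vecMulVec_ofReal {n : ℕ} (d : Fin n → ℂ) (a b : Fin n → ℝ) :
    specRad (diagonal d * (vecMulVec a b).map (fun t => (t : ℂ))) =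
      ‖∑ j, d j * (a j * b j : ℝ)‖ := by
  rw [map_vecMulVec ofReal_mul, mul_vecMulVec, specRad_vecMulVec]
  simp only [dotProduct, mulVec_diagonal, Function.comp_apply, ofReal_mul]
  congr 1
  exact Finset.sum_congr rfl fun j _ => by ring

theorem exp_neg_arg_mul_I_mul (z : ℂ) : exp (-(arg z : ℂ) * I) * z = ‖z‖ := by
  calc _ = exp (-(arg z : ℂ) * I) * (‖z‖ * exp (arg z * I)) := by rw [norm_mul_exp_arg_mul_I]
    _ = ‖z‖ := by rw [mul_left_comm, ← exp_add, neg_mul, neg_add_cancel, exp_zero, mul_one]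

theorem rho0_vecMulVec {n : ℕ} (a b : Fin n → ℝ) :
    rho0 (vecMulVec a b) = ∑ j, |a j * b j| := by
  have hle : ∀ θ : Fin n → ℝ, ‖∑ j, exp (θ j * I) * (a j * b j : ℝ)‖ ≤ ∑ j, |a j * b j| :=
    fun θ => (norm_sum_le _ _).trans_eq <| Finset.sum_congr rfl fun j _ => by
      rw [norm_mul, norm_exp_ofReal_mul_I, one_mul, norm_real, Real.norm_eq_abs]
  unfold rho0
  simp only [specRad_diagonal_mul_vecMulVec_ofReal]
  refine le_antisymm (ciSup_le hle) ?_
  let θ : Fin n → ℝ := fun j => -arg (a j * b j : ℝ)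
  have hθ : ∑ j, exp (θ j * I) * (a j * b j : ℝ) = (∑ j, |a j * b j| : ℝ) := by
    push_cast [θ]
    exact Finset.sum_congr rfl fun j _ => by
      rw [← ofReal_mul, exp_neg_arg_mul_I_mul, norm_real, Real.norm_eq_abs]
  calc ∑ j, |a j * b j| = ‖∑ j, exp (θ j * I) * (a j * b j : ℝ)‖ := by
        rw [hθ, norm_real, Real.norm_of_nonneg (by positivity)]
    _ ≤ _ := le_ciSup (f := fun θ : Fin n → ℝ => ‖∑ j, exp (θ j * I) * (a j * b j : ℝ)‖)
        ⟨_, Set.forall_mem_range.2 hle⟩ θ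

theorem restricted_observability_stability_general {n : ℕ}
    (A K₀ T : Matrix (Fin n) (Fin n) ℝ) (u v : Fin n → ℝ) :
    ((∑ j, |Matrix.vecMul v T j| * |((A - K₀) * T)⁻¹.mulVec u j|) < 1 →
      rho0 (((A - K₀) * T)⁻¹ * (Matrix.vecMulVec u v * T)) < 1) ∧
    (1 ≤ (∑ j, |Matrix.vecMul v T j| * |((A - K₀) * T)⁻¹.mulVec u j|) →
      1 ≤ rho0 (((A - K₀) * T)⁻¹ * (Matrix.vecMulVec u v * T))) := by
  have hρ : rho0 (((A - K₀) * T)⁻¹ * (vecMulVec u v * T)) =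
      ∑ j, |Matrix.vecMul v T j| * |((A - K₀) * T)⁻¹.mulVec u j| := by
    rw [vecMulVec_mul, mul_vecMulVec, rho0_vecMulVec]
    exact Finset.sum_congr rfl fun j _ => by rw [abs_mul, mul_comm]
  rw [hρ]
  exact ⟨id, id⟩

theorem restricted_observability_stability {n : ℕ}
    (A K₀ T : Matrix (Fin n) (Fin n) ℝ) (u v : Fin n → ℝ)
    (hT : IsUnit T.det) (hAK : IsUnit (A - K₀).det) :
    ((∑ j, |Matrix.vecMul v T j| * |((A - K₀) * T)⁻¹.mulVec u j|) < 1 →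
      rho0 (((A - K₀) * T)⁻¹ * (Matrix.vecMulVec u v * T)) < 1) ∧
    (1 ≤ (∑ j, |Matrix.vecMul v T j| * |((A - K₀) * T)⁻¹.mulVec u j|) →
      1 ≤ rho0 (((A - K₀) * T)⁻¹ * (Matrix.vecMulVec u v * T))) :=
  restricted_observability_stability_general A K₀ T u v
end
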